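/- With E₁, E₂, E₅ the ℤ-linear endomorphisms of ℤ² given by E₁(m)=m+l, E₁(l)=l; E₂(m)=m, E₂(l)=m+l; E₅(m)=−m, E₅(l)=l: for any coprime integers p<0 and q<0, writing |p|/|q| = [a₀; a₁,…,aₙ] with n odd, the composition E₂^{a₀}∘E₁^{a₁}∘⋯∘E₂^{a_{n−1}}∘E₁^{aₙ}∘E₅ sends m to p·m + q·l. -/

import Mathlib

open Matrix

/-- `E₁` on `ℤ² = ℤm ⊕ ℤl`: `m ↦ m + l`, `l ↦ l` (as a matrix acting by `mulVec`). -/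
def E1 : Matrix (Fin 2) (Fin 2) ℤ := !![1, 0; 1, 1]

/-- `E₂`: `m ↦ m`, `l ↦ m + l`. -/
def E2 : Matrix (Fin 2) (Fin 2) ℤ := !![1, 1; 0, 1]

/-- `E₅`: `m ↦ -m`, `l ↦ l`. -/
def E5 : Matrix (Fin 2) (Fin 2) ℤ := !![-1, 0; 0, 1]

/-- The value of the finite continued fraction `[a₀; a₁, …, aₙ]`. -/
def cfVal : List ℕ → ℚ
  | [] => 0
  | [a] => a
  | a :: b :: t => a + 1 / cfVal (b :: t)

/-!
The matrix `E₂^a E₁^b` sends `(x, y)` to `(a (b x + y) + x, b x + y)`: two steps of the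
continuant recursion for numerator and denominator of a continued fraction. So the product of
even length sends `m = (1, 0)` to the reduced fraction `(P, Q)` of `[a₀; a₁, …, aₙ]`, with `Q > 0`
because `a₁, …, aₙ > 0`. `E₅` flips the sign, and `|p| / |q|` is the same reduced fraction, so
`(p, q) = (-P, -Q)`.
-/

/-- Numerator and denominator of `[a₀; a₁, …]` by the continuant recursion, started from
`∞ = 1 / 0`. -/
def cfNumDen : List ℕ → ℕ × ℕ
  | [] => (1, 0)
  | a :: t => (a * (cfNumDen t).1 + (cfNumDen t).2, (cfNumDen t).1)

theorem cfNumDen_coprime : ∀ l : List ℕ, Nat.Coprime (cfNumDen l).1 (cfNumDen l).2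
  | [] => Nat.coprime_one_left 0
  | a :: t => (Nat.coprime_mul_right_add_left _ _ a).2 (cfNumDen_coprime t).symm

theorem cfNumDen_fst_pos : ∀ l : List ℕ, (∀ x ∈ l, 0 < x) → 0 < (cfNumDen l).1
  | [], _ => Nat.one_pos
  | a :: t, h => by
    have ha : 0 < a := h a List.mem_cons_self
    have ht := cfNumDen_fst_pos t fun x hx => h x (List.mem_cons_of_mem a hx)
    exact Nat.lt_add_right _ (Nat.mul_pos ha ht)

theorem cfVal_cons_eq_cfNumDen (a : ℕ) (t : List ℕ) (ht : ∀ x ∈ t, 0 < x) :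
    cfVal (a :: t) = (cfNumDen (a :: t)).1 / (cfNumDen (a :: t)).2 := by
  induction t generalizing a with
  | nil => simp [cfVal, cfNumDen]
  | cons b s ih =>
    have hX : ((cfNumDen (b :: s)).1 : ℚ) ≠ 0 := by
      exact_mod_cast (cfNumDen_fst_pos _ ht).ne'
    rw [cfVal, ih b fun x hx => ht x (List.mem_cons_of_mem b hx), one_div_div,
      cfNumDen.eq_2 a]
    push_cast
    field_simp

theorem Nat.eq_and_eq_of_coprime_of_cast_div_eq {a b c d : ℕ} (hb : 0 < b) (hd : 0 < d)
    (hab : a.Coprime b) (hcd : c.Coprime d) (h : (a : ℚ) / b = c / d) : a = c ∧ b = d := by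
  have := Rat.div_int_inj (a := a) (b := b) (c := c) (d := d) (by omega) (by omega) hab hcd
    (by push_cast; exact h)
  omega

theorem E1_pow (b : ℕ) : E1 ^ b = !![1, 0; (b : ℤ), 1] := by
  induction b with
  | zero => rw [pow_zero, one_fin_two]; simp
  | succ b ih => rw [pow_succ, ih, E1]; ext i j; fin_cases i <;> fin_cases j <;> simp

theorem E2_pow (b : ℕ) : E2 ^ b = !![1, (b : ℤ); 0, 1] := by
  induction b with
  | zero => rw [pow_zero, one_fin_two]; simp
  | succ b ih => rw [pow_succ, ih, E2]; ext i j; fin_cases i <;> fin_cases j <;> simp [add_comm]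

theorem E2_pow_mul_E1_pow_mulVec (a b : ℕ) (x y : ℤ) :
    (E2 ^ a * E1 ^ b) *ᵥ ![x, y] = ![a * (b * x + y) + x, b * x + y] := by
  rw [E1_pow, E2_pow]
  ext i; fin_cases i <;> simp [mulVec, dotProduct, Fin.sum_univ_two]; ring

theorem alternatingProd_mulVec (k : ℕ) (a : ℕ → ℕ) :
    ((List.range (2 * k)).map fun i => (if i % 2 = 0 then E2 else E1) ^ a i).prod *ᵥ ![1, 0] =
      ![((cfNumDen (List.ofFn fun i : Fin (2 * k) => a i)).1 : ℤ),
        (cfNumDen (List.ofFn fun i : Fin (2 * k) => a i)).2] := by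
  induction k generalizing a with
  | zero => simp [cfNumDen]
  | succ k ih =>
    have hrange : List.range (2 * (k + 1)) = 0 :: 1 :: (List.range (2 * k)).map (· + 2) := by
      rw [mul_add, List.range_succ_eq_map, List.range_succ_eq_map]
      simp [List.map_map, Function.comp_def]
    have hofFn : List.ofFn (fun i : Fin (2 * (k + 1)) => a i) =
        a 0 :: a 1 :: List.ofFn (fun i : Fin (2 * k) => a (i + 2)) := by
      simp [mul_add, List.ofFn_succ]
    have hshift : ((List.range (2 * k)).map (· + 2)).map
        (fun i => (if i % 2 = 0 then E2 else E1) ^ a i) =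
        (List.range (2 * k)).map fun i => (if i % 2 = 0 then E2 else E1) ^ a (i + 2) := by
      simp [List.map_map, Function.comp_def, Nat.add_mod_right]
    rw [hrange, List.map_cons, List.map_cons, List.prod_cons, List.prod_cons, hshift, ← mul_assoc,
      ← mulVec_mulVec, ih, hofFn,
      if_pos rfl, if_neg Nat.one_ne_zero, E2_pow_mul_E1_pow_mulVec]
    simp [cfNumDen]

/-- For coprime integers `p < 0`, `q < 0`, writing `|p| / |q| = [a₀; a₁, …, aₙ]` with `n`
odd (and `a₁, …, aₙ > 0`), the composition
`E₂^{a₀} ∘ E₁^{a₁} ∘ ⋯ ∘ E₂^{a_{n-1}} ∘ E₁^{aₙ} ∘ E₅` sends `m = (1,0)` to `p·m + q·l = (p, q)`. -/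
theorem stmt2 (p q : ℤ) (hp : p < 0) (hq : q < 0) (hpq : IsCoprime p q)
    (n : ℕ) (hn : Odd n) (a : ℕ → ℕ)
    (hpos : ∀ i, 1 ≤ i → i ≤ n → 0 < a i)
    (hcf : (p.natAbs : ℚ) / (q.natAbs : ℚ) = cfVal (List.ofFn fun i : Fin (n + 1) => a i)) :
    ((((List.range (n + 1)).map fun i => (if i % 2 = 0 then E2 else E1) ^ a i).prod
        * E5).mulVec ![1, 0]) = ![p, q] := by
  obtain ⟨m, rfl⟩ := hn
  set L := List.ofFn fun i : Fin (2 * m + 1 + 1) => a i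
  set T := List.ofFn fun i : Fin (2 * m + 1) => a (i + 1)
  have hLT : L = a 0 :: T := List.ofFn_succ
  have hT : ∀ x ∈ T, 0 < x := by
    simp only [T, List.mem_ofFn]
    rintro _ ⟨i, rfl⟩
    exact hpos _ (by omega) (by omega)
  obtain ⟨hnum, hden⟩ : (cfNumDen L).1 = p.natAbs ∧ (cfNumDen L).2 = q.natAbs :=
    Nat.eq_and_eq_of_coprime_of_cast_div_eq (hLT ▸ cfNumDen_fst_pos T hT) (by omega)
      (cfNumDen_coprime L) (Int.isCoprime_iff_gcd_eq_one.1 hpq)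
      (by rw [hcf, hLT, cfVal_cons_eq_cfNumDen _ _ hT])
  have hE5 : E5 *ᵥ ![1, 0] = -![1, 0] := by
    ext i; fin_cases i <;> simp [E5]
  rw [← mulVec_mulVec, hE5, mulVec_neg, show 2 * m + 1 + 1 = 2 * (m + 1) by ring,
    alternatingProd_mulVec, show (List.ofFn fun i : Fin (2 * (m + 1)) => a i) = L from rfl,
    hnum, hden]
  ext i; fin_cases i <;> simp [abs_of_neg hp, abs_of_neg hq]
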